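/- arXiv:1502.05106 — 6 statements merged into one kernel-verified Lean document; each statement's English description precedes it below -/
import Mathlib

section
/- Let X be a metric space with distance d, let U be a finite subset of X (the available workers), let m be the number of skill domains, s : X → Fin m → ℝ the skill function, w : X → ℝ the wage function, Q : Fin m → ℝ the skill thresholds and C : ℝ the cost budget. Assume at least one feasible group exists, and let D* be the minimum of DiaDist(G) over all feasible groups G ⊆ U. Let A be the set of all real numbers α such that α = d(x,y) for some x, y ∈ U and there exist a worker u ∈ U and a feasible group G contained in the radius-α star {v ∈ U : d(u,v) ≤ α}. Then A is nonempty, its minimum α* satisfies α* ≤ D*, and every feasible group G that is contained in {v ∈ U : d(u,v) ≤ α*} for some u ∈ U satisfies DiaDist(G) ≤ 2·α* ≤ 2·D*. (This is the 2-approximation guarantee of algorithm ApprxGrp for the Grp problem.) -/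
open Finset

/-- The diameter of a group of workers: the maximum pairwise distance,
which is `0` when the group has at most one element (`sSup ∅ = 0` over `ℝ`). -/
noncomputable def diaDist {X : Type*} [MetricSpace X] (G : Finset X) : ℝ :=
  sSup {r : ℝ | ∃ x ∈ G, ∃ y ∈ G, dist x y = r}

/-- A group `G` is feasible if it is drawn from the worker pool `U`, its
aggregated skill reaches the threshold `Q i` in every domain `i`, and its
total wage is within the budget `C`. -/
def Feasible {X : Type*} {m : ℕ} (U : Finset X) (s : X → Fin m → ℝ)
    (w : X → ℝ) (Q : Fin m → ℝ) (C : ℝ) (G : Finset X) : Prop :=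
  G ⊆ U ∧ (∀ i, Q i ≤ ∑ u ∈ G, s u i) ∧ (∑ u ∈ G, w u) ≤ C

/-- The 2-approximation guarantee of `ApprxGrp` for the `Grp` problem. -/
theorem approxGrp_two_approximation {X : Type*} [MetricSpace X] {m : ℕ}
    (U : Finset X) (hU : U.Nonempty)
    (s : X → Fin m → ℝ) (w : X → ℝ) (Q : Fin m → ℝ) (C : ℝ)
    (hex : ∃ G, Feasible U s w Q C G)
    (Dstar : ℝ)
    (hD : IsLeast {r : ℝ | ∃ G, Feasible U s w Q C G ∧ diaDist G = r} Dstar)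
    (A : Set ℝ)
    (hA : A = {α : ℝ | (∃ x ∈ U, ∃ y ∈ U, dist x y = α) ∧
        ∃ u ∈ U, ∃ G, Feasible U s w Q C G ∧ ∀ v ∈ G, dist u v ≤ α}) :
    A.Nonempty ∧
      ∀ αstar : ℝ, IsLeast A αstar →
        αstar ≤ Dstar ∧
          ∀ G, Feasible U s w Q C G →
            (∃ u ∈ U, ∀ v ∈ G, dist u v ≤ αstar) →
              diaDist G ≤ 2 * αstar ∧ 2 * αstar ≤ 2 * Dstar := by
  obtain ⟨⟨G0, hG0f, hG0d⟩, hDlb⟩ := hD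
  have key : Dstar ∈ A := by
    rw [hA]
    rcases G0.eq_empty_or_nonempty with h0 | h0
    · subst h0
      have hd0 : Dstar = 0 := by
        rw [← hG0d, diaDist]
        have : {r : ℝ | ∃ x ∈ (∅ : Finset X), ∃ y ∈ (∅ : Finset X), dist x y = r} = ∅ := by
          ext r; simp
        rw [this, Real.sSup_empty]
      obtain ⟨x, hx⟩ := hU
      exact ⟨⟨x, hx, x, hx, by simp [hd0]⟩, x, hx, ∅, hG0f, by simp⟩
    · set S := {r : ℝ | ∃ x ∈ G0, ∃ y ∈ G0, dist x y = r} with hSdef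
      have hS : S = Set.image2 dist (G0 : Set X) (G0 : Set X) := by
        ext r; simp [hSdef, Set.mem_image2]
      have hfin : S.Finite := by
        rw [hS]; exact G0.finite_toSet.image2 _ G0.finite_toSet
      have hne : S.Nonempty := by
        obtain ⟨x, hx⟩ := h0
        exact ⟨dist x x, x, hx, x, hx, rfl⟩
      have hmem := hne.csSup_mem hfin
      have hDS : sSup S = Dstar := hG0d
      rw [hDS] at hmem
      obtain ⟨x, hx, y, hy, hxy⟩ := hmem
      refine ⟨⟨x, hG0f.1 hx, y, hG0f.1 hy, hxy⟩, x, hG0f.1 hx, G0, hG0f, ?_⟩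
      intro v hv
      have : dist x v ≤ sSup S := le_csSup hfin.bddAbove ⟨x, hx, v, hv, rfl⟩
      rwa [hDS] at this
  refine ⟨⟨Dstar, key⟩, ?_⟩
  intro αstar hα
  have hle : αstar ≤ Dstar := hα.2 key
  have hnn : 0 ≤ αstar := by
    have h1 := hα.1
    rw [hA] at h1
    obtain ⟨⟨x, hx, y, hy, hxy⟩, _⟩ := h1
    rw [← hxy]; exact dist_nonneg
  refine ⟨hle, ?_⟩
  rintro G hG ⟨u, hu, hball⟩
  refine ⟨?_, by linarith⟩
  apply Real.sSup_le
  · rintro r ⟨x, hx, y, hy, rfl⟩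
    calc dist x y ≤ dist x u + dist u y := dist_triangle x u y
      _ ≤ αstar + αstar := add_le_add (by rw [dist_comm]; exact hball x hx) (hball y hy)
      _ = 2 * αstar := by ring
  · linarith
end

section
/- Let V be a finite set of n points in a metric space with distance d, and let K be a natural number with K < n ≤ 2K (so that ⌈n/K⌉ = 2). Then the minimum, over all subsets A ⊆ V with |A| = K, of the bipartition cut cut(A) = ∑_{a∈A, b∈V∖A} d(a,b), is at most twice the minimum of the inter-group distance over all partitions of V into nonempty parts each of size at most K. (SpltBOpt is a 2-approximation for the Splt problem when the number of balanced parts is 2.) -/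
open Finset

/-- The inter-group distance (Splt objective) of a partition `G 0, …, G (x-1)`:
the sum of `dist a b` over all unordered pairs of points lying in different
parts, each cross pair counted once. -/
noncomputable def interDist {X : Type*} [MetricSpace X] {x : ℕ}
    (G : Fin x → Finset X) : ℝ :=
  ∑ i : Fin x, ∑ j : Fin x,
    if i < j then ∑ a ∈ G i, ∑ b ∈ G j, dist a b else 0

/-- `G` is a partition of `V` into nonempty pairwise disjoint parts. -/
def IsPartitionOf {X : Type*} [DecidableEq X] {x : ℕ} (V : Finset X)
    (G : Fin x → Finset X) : Prop :=
  (∀ i, (G i).Nonempty) ∧ (∀ i j, i ≠ j → Disjoint (G i) (G j)) ∧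
    Finset.univ.biUnion G = V

/-!
Take a family `W` of parts of largest total size `w` subject to `w ≤ K`. Some part `P ∉ W` has
`|P| ≤ w` (a single part of size `> w` would contradict maximality), and then `K < w + |P|`.
Let `A` be the union of `W` together with `K - w` points of `P`. Pairs of points of `A × (V ∖ A)`
lying in different parts are cross pairs of the partition, each met at most once, so they cost at
most the inter-group distance; the remaining pairs form `S × T`, where `S ⊔ T = P`. Since
`|S|, |T| ≤ |P| ≤ |V ∖ P|`, routing each pair of `S × T` through every point of `V ∖ P` by the
triangle inequality bounds `d(S, T)` by `d(P, V ∖ P)`, which is again a sum over cross pairs.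
-/

section SumDist

variable {X : Type*} [MetricSpace X]

noncomputable def sumDist (s t : Finset X) : ℝ :=
  ∑ a ∈ s, ∑ b ∈ t, dist a b

lemma sumDist_comm (s t : Finset X) : sumDist s t = sumDist t s := by
  unfold sumDist
  rw [sum_comm]
  simp only [dist_comm]

@[simp]
lemma sumDist_empty_left (t : Finset X) : sumDist ∅ t = 0 := sum_empty

@[simp]
lemma sumDist_empty_right (s : Finset X) : sumDist s ∅ = 0 := by
  simp [sumDist]

lemma sumDist_mono_right (s : Finset X) {t t' : Finset X} (h : t ⊆ t') :
    sumDist s t ≤ sumDist s t' :=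
  sum_le_sum fun _ _ => sum_le_sum_of_subset_of_nonneg h fun _ _ _ => dist_nonneg

lemma sumDist_le_mul_add_mul (s t : Finset X) (z : X) :
    sumDist s t ≤ #t * ∑ a ∈ s, dist a z + #s * ∑ b ∈ t, dist b z :=
  calc sumDist s t ≤ ∑ a ∈ s, ∑ b ∈ t, (dist a z + dist b z) :=
        sum_le_sum fun a _ => sum_le_sum fun b _ => dist_triangle_right a b z
    _ = #t * ∑ a ∈ s, dist a z + #s * ∑ b ∈ t, dist b z := by
        simp only [sum_add_distrib, sum_const, nsmul_eq_mul, mul_sum]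

lemma sumDist_le_add_of_card_le {s t : Finset X} (c : Finset X) (hs : #s ≤ #c) (ht : #t ≤ #c) :
    sumDist s t ≤ sumDist s c + sumDist t c := by
  obtain rfl | hc := c.eq_empty_or_nonempty
  · simp_all
  refine le_of_mul_le_mul_left ?_ (Nat.cast_pos.mpr hc.card_pos : (0 : ℝ) < #c)
  calc (#c : ℝ) * sumDist s t = ∑ _z ∈ c, sumDist s t := by rw [sum_const, nsmul_eq_mul]
    _ ≤ ∑ z ∈ c, (#t * ∑ a ∈ s, dist a z + #s * ∑ b ∈ t, dist b z) :=
        sum_le_sum fun z _ => sumDist_le_mul_add_mul s t z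
    _ ≤ ∑ z ∈ c, (#c * ∑ a ∈ s, dist a z + #c * ∑ b ∈ t, dist b z) := by
        gcongr with z
    _ = #c * (sumDist s c + sumDist t c) := by
        simp only [sumDist, sum_add_distrib, ← mul_sum, mul_add, sum_comm (s := c)]

variable [DecidableEq X]

lemma sumDist_union_left {s s' : Finset X} (h : Disjoint s s') (t : Finset X) :
    sumDist (s ∪ s') t = sumDist s t + sumDist s' t :=
  sum_union h

lemma sumDist_biUnion_left {ι : Type*} {I : Finset ι} {f : ι → Finset X}
    (h : (I : Set ι).PairwiseDisjoint f) (t : Finset X) :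
    sumDist (I.biUnion f) t = ∑ i ∈ I, sumDist (f i) t :=
  sum_biUnion h

lemma sumDist_biUnion_right {ι : Type*} {I : Finset ι} {f : ι → Finset X}
    (h : (I : Set ι).PairwiseDisjoint f) (s : Finset X) :
    sumDist s (I.biUnion f) = ∑ i ∈ I, sumDist s (f i) := by
  rw [sumDist_comm, sumDist_biUnion_left h]
  simp only [sumDist_comm]

lemma sumDist_inter_sdiff_le_of_card_le (P A : Finset X) {C : Finset X} (h : #P ≤ #C) :
    sumDist (P ∩ A) (P \ A) ≤ sumDist P C :=
  calc sumDist (P ∩ A) (P \ A) ≤ sumDist (P ∩ A) C + sumDist (P \ A) C :=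
        sumDist_le_add_of_card_le C ((card_le_card inter_subset_left).trans h)
          ((card_le_card sdiff_subset).trans h)
    _ = sumDist P C := by
        rw [add_comm, ← sumDist_union_left (disjoint_sdiff_inter P A), sdiff_union_inter]

lemma sumDist_inter_sdiff_add_le (s t A : Finset X) :
    sumDist (s ∩ A) (t \ A) + sumDist (t ∩ A) (s \ A) ≤ sumDist s t := by
  rw [sumDist_comm (t ∩ A), ← sdiff_union_inter s A, sumDist_union_left (disjoint_sdiff_inter s A),
    sdiff_union_inter, add_comm]
  gcongr <;> exact sumDist_mono_right _ (by simp)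

lemma sumDist_inter_sdiff_eq_zero {s A : Finset X} (h : s ⊆ A ∨ Disjoint s A) :
    sumDist (s ∩ A) (s \ A) = 0 := by
  obtain h | h := h
  · rw [sdiff_eq_empty_iff_subset.mpr h, sumDist_empty_right]
  · rw [disjoint_iff_inter_eq_empty.mp h, sumDist_empty_left]

end SumDist

theorem Finset.sum_sum_eq_sum_diag_add {ι M : Type*} [Fintype ι] [LinearOrder ι]
    [AddCommMonoid M] (f : ι → ι → M) :
    ∑ i, ∑ j, f i j = ∑ i, f i i + ∑ i, ∑ j, if i < j then f i j + f j i else 0 := by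
  have hsplit : ∀ i j, f i j = (if i = j then f i j else 0) + (if i < j then f i j else 0) +
      (if j < i then f i j else 0) := by
    intro i j
    rcases lt_trichotomy i j with h | rfl | h
    · simp [h, h.ne, h.not_gt]
    · simp
    · simp [h, h.ne', h.not_gt]
  conv_lhs => enter [2, i, 2, j]; rw [hsplit i j]
  simp only [sum_add_distrib, ite_add_zero, sum_ite_eq, mem_univ, if_true, add_assoc]
  rw [sum_comm (f := fun i j => if j < i then f i j else 0)]

lemma subset_or_disjoint_biUnion_union {ι X : Type*} [DecidableEq X] {G : ι → Finset X}
    (hdisj : ∀ i j, i ≠ j → Disjoint (G i) (G j))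
    (W : Finset ι) {j : ι} {S : Finset X} (hS : S ⊆ G j) :
    ∀ i ≠ j, G i ⊆ W.biUnion G ∪ S ∨ Disjoint (G i) (W.biUnion G ∪ S) := by
  intro i hij
  by_cases hi : i ∈ W
  · exact .inl ((subset_biUnion_of_mem G hi).trans subset_union_left)
  · refine .inr (disjoint_union_right.mpr ⟨?_, (hdisj i j hij).mono_right hS⟩)
    exact (disjoint_biUnion_right _ _ _).mpr fun k hk =>
      hdisj i k (ne_of_mem_of_not_mem hk hi).symm

section Partition

variable {X : Type*} [MetricSpace X] [DecidableEq X] {x : ℕ} {V : Finset X} {G : Fin x → Finset X}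

lemma sumDist_compl_le_interDist_add (hdisj : ∀ i j, i ≠ j → Disjoint (G i) (G j))
    (hcover : univ.biUnion G = V) {A : Finset X} (hA : A ⊆ V) (j : Fin x)
    (hsplit : ∀ i ≠ j, G i ⊆ A ∨ Disjoint (G i) A) :
    sumDist A (V \ A) ≤ interDist G + sumDist (G j ∩ A) (G j \ A) := by
  have hdisjA : ((univ : Finset (Fin x)) : Set (Fin x)).PairwiseDisjoint (G · ∩ A) :=
    fun i _ i' _ hii' => (hdisj i i' hii').mono inter_subset_left inter_subset_left
  have hdisjVA : ((univ : Finset (Fin x)) : Set (Fin x)).PairwiseDisjoint (G · \ A) :=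
    fun i _ i' _ hii' => (hdisj i i' hii').mono sdiff_subset sdiff_subset
  have hA' : univ.biUnion (fun i => G i ∩ A) = A := by
    ext a; simpa [← hcover] using fun ha => hA ha
  have hVA : univ.biUnion (fun i => G i \ A) = V \ A := by
    ext a; simp [← hcover, and_comm]
  have hdiag : ∑ i, sumDist (G i ∩ A) (G i \ A) = sumDist (G j ∩ A) (G j \ A) :=
    sum_eq_single j (fun i _ hij => sumDist_inter_sdiff_eq_zero (hsplit i hij)) (by simp)
  calc sumDist A (V \ A)
        = sumDist (univ.biUnion fun i => G i ∩ A) (univ.biUnion fun i => G i \ A) := by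
        rw [hA', hVA]
    _ = ∑ i, ∑ j, sumDist (G i ∩ A) (G j \ A) := by
        rw [sumDist_biUnion_left hdisjA]
        simp only [sumDist_biUnion_right hdisjVA]
    _ = ∑ i, sumDist (G i ∩ A) (G i \ A) + ∑ i, ∑ j, if i < j then
          sumDist (G i ∩ A) (G j \ A) + sumDist (G j ∩ A) (G i \ A) else 0 :=
        sum_sum_eq_sum_diag_add _
    _ ≤ sumDist (G j ∩ A) (G j \ A) + ∑ i, ∑ j, if i < j then sumDist (G i) (G j) else 0 := by
        rw [hdiag]
        gcongr with i _ k
        split_ifs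
        · exact sumDist_inter_sdiff_add_le _ _ _
        · rfl
    _ = interDist G + sumDist (G j ∩ A) (G j \ A) := add_comm _ _

lemma sumDist_compl_le_interDist (hdisj : ∀ i j, i ≠ j → Disjoint (G i) (G j))
    (hcover : univ.biUnion G = V) (j : Fin x) : sumDist (G j) (V \ G j) ≤ interDist G := by
  simpa using sumDist_compl_le_interDist_add hdisj hcover
    (hcover ▸ subset_biUnion_of_mem G (mem_univ j)) j fun i hij => .inr (hdisj i j hij)

end Partition

theorem exists_subset_sum_le_lt_add {ι : Type*} [Fintype ι] (c : ι → ℕ) {K : ℕ}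
    (hpos : ∀ i, 0 < c i) (hle : ∀ i, c i ≤ K) (hK : K < ∑ i, c i) :
    ∃ W : Finset ι, ∃ j ∉ W,
      ∑ i ∈ W, c i ≤ K ∧ K < ∑ i ∈ W, c i + c j ∧ c j ≤ ∑ i ∈ W, c i := by
  classical
  obtain ⟨W, hW, hWmax⟩ := exists_max_image ({W | ∑ i ∈ W, c i ≤ K} : Finset (Finset ι))
    (fun W => ∑ i ∈ W, c i) ⟨∅, by simp⟩
  have hWK : ∑ i ∈ W, c i ≤ K := (mem_filter.mp hW).2
  have hmax : ∀ W' : Finset ι, ∑ i ∈ W', c i ≤ K → ∑ i ∈ W', c i ≤ ∑ i ∈ W, c i :=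
    fun W' h => hWmax W' (mem_filter.mpr ⟨mem_univ _, h⟩)
  obtain ⟨j₁, hj₁⟩ : ∃ j, j ∉ W := by
    by_contra! h
    rw [eq_univ_of_forall h] at hWK
    omega
  obtain ⟨j, hjW, hj⟩ : ∃ j ∉ W, c j ≤ ∑ i ∈ W, c i :=
    ⟨j₁, hj₁, by simpa using hmax {j₁} (by simpa using hle j₁)⟩
  refine ⟨W, j, hjW, hWK, ?_, hj⟩
  by_contra! h
  have := hmax (insert j W) (by rwa [sum_insert hjW, add_comm])
  rw [sum_insert hjW] at this
  have := hpos j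
  omega

theorem spltBOpt_two_approx_general {X : Type*} [MetricSpace X] [DecidableEq X]
    (V : Finset X) (K : ℕ) (hK : K < V.card)
    (x : ℕ) (G : Fin x → Finset X) (hpart : IsPartitionOf V G)
    (hsize : ∀ i, (G i).card ≤ K) :
    ∃ A ⊆ V, A.card = K ∧
      (∑ a ∈ A, ∑ b ∈ V \ A, dist a b) ≤ 2 * interDist G := by
  obtain ⟨hne, hdisj, hcover⟩ := hpart
  have hGV : ∀ i, G i ⊆ V := fun i => hcover ▸ subset_biUnion_of_mem G (mem_univ i)
  have hcard : ∀ s : Finset (Fin x), #(s.biUnion G) = ∑ i ∈ s, #(G i) :=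
    fun s => card_biUnion fun i _ j _ hij => hdisj i j hij
  obtain ⟨W, j, hjW, hWK, hKlt, hjW'⟩ := exists_subset_sum_le_lt_add (fun i => #(G i))
    (fun i => (hne i).card_pos) hsize (by rwa [← hcard, hcover])
  rw [← hcard] at hWK hKlt hjW'
  obtain ⟨S, hSj, hScard⟩ := exists_subset_card_eq (s := G j) (n := K - #(W.biUnion G)) (by omega)
  have hWj : Disjoint (W.biUnion G) (G j) :=
    (disjoint_biUnion_left _ _ _).mpr fun i hi => hdisj i j (ne_of_mem_of_not_mem hi hjW)
  have hWV : W.biUnion G ⊆ V := biUnion_subset.mpr fun i _ => hGV i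
  set A := W.biUnion G ∪ S
  have hAV : A ⊆ V := union_subset hWV (hSj.trans (hGV j))
  have hjC : #(G j) ≤ #(V \ G j) := hjW'.trans (card_le_card (subset_sdiff.mpr ⟨hWV, hWj⟩))
  refine ⟨A, hAV, ?_, ?_⟩
  · rw [card_union_of_disjoint (hWj.mono_right hSj)]
    omega
  calc sumDist A (V \ A) ≤ interDist G + sumDist (G j ∩ A) (G j \ A) :=
        sumDist_compl_le_interDist_add hdisj hcover hAV j
          (subset_or_disjoint_biUnion_union hdisj W hSj)
    _ ≤ interDist G + sumDist (G j) (V \ G j) := by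
        gcongr
        exact sumDist_inter_sdiff_le_of_card_le _ _ hjC
    _ ≤ 2 * interDist G := by
        linarith [sumDist_compl_le_interDist hdisj hcover j]

/-- SpltBOpt is a 2-approximation for Splt when the number of balanced parts is
two: for `K < n ≤ 2K`, the minimum over size-`K` subsets `A ⊆ V` of the
bipartition cut `∑_{a ∈ A, b ∈ V∖A} d(a,b)` is at most twice the inter-group
distance of any partition of `V` into nonempty parts of size at most `K`. -/
theorem spltBOpt_two_approx {X : Type*} [MetricSpace X] [DecidableEq X]
    (V : Finset X) (K : ℕ) (hK : K < V.card) (hn : V.card ≤ 2 * K)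
    (x : ℕ) (G : Fin x → Finset X) (hpart : IsPartitionOf V G)
    (hsize : ∀ i, (G i).card ≤ K) :
    ∃ A ⊆ V, A.card = K ∧
      (∑ a ∈ A, ∑ b ∈ V \ A, dist a b) ≤ 2 * interDist G :=
  spltBOpt_two_approx_general V K hK x G hpart hsize
end

section
/- Let V be a finite set of n points in a metric space with distance d, partitioned into nonempty parts G_1, …, G_x with |G_i| = k_i, and let u_1, …, u_x be arbitrary points of the space (in particular centers u_i ∈ G_i). Then the total inter-group distance satisfies ∑_{i<j} ∑_{a∈G_i, b∈G_j} d(a,b) ≤ ∑_{i=1}^{x} (n − k_i) · ∑_{a∈G_i} d(a, u_i) + ∑_{i<j} k_i · k_j · d(u_i, u_j). -/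
open Finset

/-- Triangle-inequality bound supporting the Min-Star-Partition analysis: the
total inter-group distance is at most the star term
`∑ i (n − k_i)·∑_{a ∈ G_i} d(a, u_i)` plus the center-pair term
`∑_{i<j} k_i·k_j·d(u_i, u_j)`, for arbitrary points `u_i`. -/
theorem interDist_le_star_plus_centers {X : Type*} [MetricSpace X]
    [DecidableEq X] (V : Finset X) (x : ℕ) (G : Fin x → Finset X)
    (hpart : IsPartitionOf V G) (u : Fin x → X) :
    interDist G ≤
      (∑ i : Fin x, ((V.card : ℝ) - (G i).card) * ∑ a ∈ G i, dist a (u i)) +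
      ∑ i : Fin x, ∑ j : Fin x,
        (if i < j then ((G i).card : ℝ) * (G j).card * dist (u i) (u j)
          else 0) := by
  obtain ⟨hne, hdisj, hunion⟩ := hpart
  set k : Fin x → ℝ := fun i => ((G i).card : ℝ) with hk
  set S : Fin x → ℝ := fun i => ∑ a ∈ G i, dist a (u i) with hS
  have hsumk : ∑ j : Fin x, k j = (V.card : ℝ) := by
    rw [← hunion, Finset.card_biUnion (fun i _ j _ h => hdisj i j h)]
    push_cast; rfl
  have step1 : interDist G ≤ ∑ i : Fin x, ∑ j : Fin x,
      if i < j then k j * S i + k i * S j + k i * k j * dist (u i) (u j) else 0 := by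
    unfold interDist
    refine Finset.sum_le_sum fun i _ => Finset.sum_le_sum fun j _ => ?_
    split
    · calc ∑ a ∈ G i, ∑ b ∈ G j, dist a b
          ≤ ∑ a ∈ G i, ∑ b ∈ G j,
              (dist a (u i) + dist (u i) (u j) + dist (u j) b) :=
            Finset.sum_le_sum fun a _ => Finset.sum_le_sum fun b _ =>
              dist_triangle4 a (u i) (u j) b
        _ = k j * S i + k i * S j + k i * k j * dist (u i) (u j) := by
            simp only [Finset.sum_add_distrib, Finset.sum_const, nsmul_eq_mul, hS, hk,
              Finset.mul_sum]
            rw [show (∑ b ∈ G j, ((G i).card : ℝ) * dist (u j) b)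
                = ∑ b ∈ G j, ((G i).card : ℝ) * dist b (u j) from
              Finset.sum_congr rfl fun b _ => by rw [dist_comm]]
            ring
    · exact le_refl _
  have hstar : (∑ i : Fin x, ∑ j : Fin x,
      if i < j then k j * S i + k i * S j else 0)
      = ∑ i : Fin x, ((V.card : ℝ) - k i) * S i := by
    have split : ∀ i j : Fin x, (if i < j then k j * S i + k i * S j else 0)
        = (if i < j then k j * S i else 0) + (if i < j then k i * S j else 0) := by
      intro i j; split <;> simp
    simp only [split, Finset.sum_add_distrib]
    rw [Finset.sum_comm (f := fun i j => if i < j then k i * S j else 0)]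
    have merge : ∀ i : Fin x,
        ((∑ j : Fin x, if i < j then k j * S i else 0) +
         ∑ j : Fin x, if j < i then k j * S i else 0)
        = ((V.card : ℝ) - k i) * S i := by
      intro i
      rw [← Finset.sum_add_distrib]
      have : ∀ j : Fin x, ((if i < j then k j * S i else 0) +
          if j < i then k j * S i else 0) = (if j ≠ i then k j else 0) * S i := by
        intro j
        rcases lt_trichotomy i j with h | h | h
        · simp [h, asymm h, h.ne']
        · simp [h]
        · simp [h, asymm h, h.ne]
      simp only [this]
      rw [← Finset.sum_mul]
      congr 1
      rw [← Finset.sum_filter, Finset.filter_ne', Finset.sum_erase_eq_sub (Finset.mem_univ i), hsumk]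
    rw [← Finset.sum_add_distrib]
    exact Finset.sum_congr rfl fun i _ => merge i
  calc interDist G ≤ _ := step1
    _ = (∑ i : Fin x, ∑ j : Fin x, if i < j then k j * S i + k i * S j else 0)
        + ∑ i : Fin x, ∑ j : Fin x,
          (if i < j then k i * k j * dist (u i) (u j) else 0) := by
        rw [← Finset.sum_add_distrib]
        refine Finset.sum_congr rfl fun i _ => ?_
        rw [← Finset.sum_add_distrib]
        refine Finset.sum_congr rfl fun j _ => ?_
        split <;> simp
    _ = _ := by rw [hstar]
end

section
/- Let V be a finite set of n points in a metric space with distance d, partitioned into nonempty parts G_1, …, G_x with |G_i| = k_i, and let u_1, …, u_x be any points with u_i ∈ G_i. Then the center-pair term of the Min-Star objective is bounded as ∑_{i<j} k_i · k_j · d(u_i, u_j) ≤ ∑_{i=1}^{x} (n − k_i) · ∑_{a∈G_i} d(a, u_i) + ∑_{i<j} ∑_{a∈G_i, b∈G_j} d(a,b). -/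
open Finset

/-- Averaging the triangle inequality `d(u_i,u_j) ≤ d(u_i,a)+d(a,b)+d(b,u_j)`
over `a ∈ G_i`, `b ∈ G_j`: the center-pair term of the Min-Star objective is
bounded by the star term plus the total inter-group distance. -/
theorem center_pairs_le_star_plus_interDist {X : Type*} [MetricSpace X]
    [DecidableEq X] (V : Finset X) (x : ℕ) (G : Fin x → Finset X)
    (hpart : IsPartitionOf V G) (u : Fin x → X) (hu : ∀ i, u i ∈ G i) :
    (∑ i : Fin x, ∑ j : Fin x,
        (if i < j then ((G i).card : ℝ) * (G j).card * dist (u i) (u j)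
          else 0)) ≤
      (∑ i : Fin x, ((V.card : ℝ) - (G i).card) * ∑ a ∈ G i, dist a (u i)) +
        interDist G := by
  obtain ⟨hne, hdisj, hV⟩ := hpart
  classical
  set k : Fin x → ℝ := fun i => ((G i).card : ℝ) with hk
  set S : Fin x → ℝ := fun i => ∑ a ∈ G i, dist a (u i) with hS
  have hcard : (V.card : ℝ) = ∑ i : Fin x, k i := by
    rw [← hV, Finset.card_biUnion (fun i _ j _ h => hdisj i j h)]
    push_cast
    rfl
  have step1 : ∀ i j : Fin x,
      k i * k j * dist (u i) (u j)
        ≤ k j * S i + k i * S j + ∑ a ∈ G i, ∑ b ∈ G j, dist a b := by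
    intro i j
    have h1 : k i * k j * dist (u i) (u j)
        = ∑ a ∈ G i, ∑ b ∈ G j, dist (u i) (u j) := by
      simp [hk, Finset.sum_const]
      ring
    have h2 : k j * S i + k i * S j + ∑ a ∈ G i, ∑ b ∈ G j, dist a b
        = ∑ a ∈ G i, ∑ b ∈ G j, (dist (u i) a + dist a b + dist b (u j)) := by
      simp only [Finset.sum_add_distrib, Finset.sum_const, hk, hS,
        Finset.mul_sum, nsmul_eq_mul]
      simp only [dist_comm]
      ring
    rw [h1, h2]
    refine Finset.sum_le_sum fun a _ => Finset.sum_le_sum fun b _ => ?_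
    exact dist_triangle4 (u i) a b (u j)
  have main : (∑ i : Fin x, ∑ j : Fin x,
        (if i < j then k i * k j * dist (u i) (u j) else 0))
      ≤ ∑ i : Fin x, ∑ j : Fin x,
        (if i < j then k j * S i + k i * S j
            + ∑ a ∈ G i, ∑ b ∈ G j, dist a b else 0) := by
    refine Finset.sum_le_sum fun i _ => Finset.sum_le_sum fun j _ => ?_
    split
    · exact step1 i j
    · exact le_refl 0
  have split : (∑ i : Fin x, ∑ j : Fin x,
        (if i < j then k j * S i + k i * S j
            + ∑ a ∈ G i, ∑ b ∈ G j, dist a b else 0))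
      = (∑ i : Fin x, ∑ j : Fin x, (if i < j then k j * S i + k i * S j else 0))
        + interDist G := by
    rw [interDist, ← Finset.sum_add_distrib]
    refine Finset.sum_congr rfl fun i _ => ?_
    rw [← Finset.sum_add_distrib]
    refine Finset.sum_congr rfl fun j _ => ?_
    split <;> simp
  have mixed : (∑ i : Fin x, ∑ j : Fin x,
        (if i < j then k j * S i + k i * S j else 0))
      = ∑ i : Fin x, ((V.card : ℝ) - k i) * S i := by
    have e1 : (∑ i : Fin x, ∑ j : Fin x, (if i < j then k i * S j else 0))
        = ∑ i : Fin x, ∑ j : Fin x, (if j < i then k j * S i else 0) := by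
      rw [Finset.sum_comm]
    have e2 : (∑ i : Fin x, ∑ j : Fin x,
          (if i < j then k j * S i + k i * S j else 0))
        = ∑ i : Fin x, ∑ j : Fin x, (if i ≠ j then k j * S i else 0) := by
      have : ∀ i j : Fin x, (if i < j then k j * S i + k i * S j else 0)
          = (if i < j then k j * S i else 0) + (if i < j then k i * S j else 0) := by
        intro i j; split <;> simp
      simp only [this, Finset.sum_add_distrib]
      rw [e1, ← Finset.sum_add_distrib]
      refine Finset.sum_congr rfl fun i _ => ?_
      rw [← Finset.sum_add_distrib]
      refine Finset.sum_congr rfl fun j _ => ?_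
      rcases lt_trichotomy i j with h | h | h
      · simp [h, h.ne, not_lt.mpr h.le]
      · simp [h]
      · simp [h, h.ne', not_lt.mpr h.le]
    rw [e2]
    refine Finset.sum_congr rfl fun i _ => ?_
    have : (∑ j : Fin x, (if i ≠ j then k j * S i else 0))
        = (∑ j : Fin x, k j * S i) - k i * S i := by
      rw [eq_sub_iff_add_eq]
      have hi : (∑ j : Fin x, if i = j then k j * S i else 0) = k i * S i := by
        simp [Finset.sum_ite_eq]
      rw [← hi, ← Finset.sum_add_distrib]
      refine Finset.sum_congr rfl fun j _ => ?_
      by_cases h : i = j <;> simp [h]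
    rw [this, ← Finset.sum_mul, hcard]
    ring
  calc (∑ i : Fin x, ∑ j : Fin x,
        (if i < j then k i * k j * dist (u i) (u j) else 0))
      ≤ _ := main
    _ = _ := split
    _ = (∑ i : Fin x, ((V.card : ℝ) - k i) * S i) + interDist G := by rw [mixed]
end

section
/- Let U be a finite set of workers partitioned into wage buckets B_1, …, B_k such that the wage function w : U → ℝ is constant on each bucket, and let s : U → ℝ be a single-domain skill function. Fix for each bucket B_b a linear ordering of its elements by nonincreasing skill, and for 0 ≤ t ≤ |B_b| let Top_t(B_b) denote the set of the first t workers (the t most skilled) of B_b. If G ⊆ U satisfies ∑_{u∈G} s(u) ≥ Q and ∑_{u∈G} w(u) ≤ C, then the group G' := ⋃_{b=1}^{k} Top_{|G ∩ B_b|}(B_b) also satisfies ∑_{u∈G'} s(u) ≥ Q and ∑_{u∈G'} w(u) ≤ C. In particular, when wages take only k distinct values, the search for a feasible group may be restricted to groups that select, within each bucket, a most-skilled prefix. -/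
/-!
Within one bucket every worker costs the same, so only the number of workers taken from a
bucket affects the wage total; and among all sets of a given size drawn from a list sorted by
nonincreasing skill, the prefix of that length has the largest total skill (an exchange
argument: swap any chosen worker for the head of the list). Summing over the disjoint buckets
gives both inequalities.
-/

open Finset

namespace List

variable {X M : Type*} [DecidableEq X] [AddCommMonoid M] [PartialOrder M] [IsOrderedAddMonoid M]

theorem sum_le_sum_toFinset_take_card {f : X → M} :
    ∀ {L : List X}, L.Nodup → L.Pairwise (fun x y => f y ≤ f x) →
      ∀ {S : Finset X}, S ⊆ L.toFinset → ∑ x ∈ S, f x ≤ ∑ x ∈ (L.take #S).toFinset, f x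
  | [], _, _, S, hS => by simp_all
  | a :: L, hnd, hsort, S, hS => by
    obtain ⟨haL, hndL⟩ := List.nodup_cons.mp hnd
    obtain ⟨hmax, hsortL⟩ := List.pairwise_cons.mp hsort
    obtain rfl | ⟨y, hy⟩ := S.eq_empty_or_nonempty
    · simp
    -- Drop `a` from `S` if it is there, otherwise any element of `S`, which `a` dominates.
    obtain ⟨x, hxS, hxa, hsub⟩ : ∃ x ∈ S, f x ≤ f a ∧ S.erase x ⊆ L.toFinset := by
      by_cases haS : a ∈ S
      · refine ⟨a, haS, le_rfl, fun z hz => ?_⟩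
        have := hS (Finset.mem_of_mem_erase hz)
        simp_all
      · have hSL : S ⊆ L.toFinset := fun z hz => by
          have := hS hz
          simp only [List.toFinset_cons, mem_insert] at this
          exact this.resolve_left (by rintro rfl; exact haS hz)
        exact ⟨y, hy, hmax y (List.mem_toFinset.mp (hSL hy)),
          (Finset.erase_subset y S).trans hSL⟩
    have ha_take : a ∉ (L.take #(S.erase x)).toFinset := fun h =>
      haL (List.take_subset _ L (List.mem_toFinset.mp h))
    calc ∑ z ∈ S, f z = f x + ∑ z ∈ S.erase x, f z := (add_sum_erase S f hxS).symm
      _ ≤ f a + ∑ z ∈ (L.take #(S.erase x)).toFinset, f z :=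
          add_le_add hxa (sum_le_sum_toFinset_take_card hndL hsortL hsub)
      _ = ∑ z ∈ ((a :: L).take #S).toFinset, f z := by
          rw [← card_erase_add_one hxS, List.take_succ_cons, List.toFinset_cons,
            sum_insert ha_take]

theorem toFinset_take_subset (L : List X) (n : ℕ) :
    (L.take n).toFinset ⊆ L.toFinset := fun _ hx =>
  List.mem_toFinset.mpr (List.take_subset n L (List.mem_toFinset.mp hx))

theorem card_toFinset_take_of_nodup {L : List X} (hL : L.Nodup)
    {n : ℕ} (hn : n ≤ L.length) : #(L.take n).toFinset = n := by
  rw [List.toFinset_card_of_nodup (hL.sublist (L.take_sublist n)), List.length_take,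
    min_eq_left hn]

end List

theorem Finset.sum_eq_sum_of_card_eq_of_subset_of_forall_eq {X M : Type*} [AddCommMonoid M]
    {B S T : Finset X} {w : X → M} (hw : ∀ x ∈ B, ∀ y ∈ B, w x = w y)
    (hS : S ⊆ B) (hT : T ⊆ B) (hST : #S = #T) : ∑ x ∈ S, w x = ∑ x ∈ T, w x := by
  obtain rfl | ⟨x₀, hx₀⟩ := S.eq_empty_or_nonempty
  · rw [eq_comm, card_empty, card_eq_zero] at hST
    rw [hST]
  rw [sum_eq_card_nsmul fun x hx => hw x (hS hx) x₀ (hS hx₀),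
    sum_eq_card_nsmul fun x hx => hw x (hT hx) x₀ (hS hx₀), hST]

theorem Finset.sum_biUnion_of_subset_of_disjoint {ι X M : Type*} [DecidableEq X] [AddCommMonoid M]
    {B T : ι → Finset X} (hdisj : ∀ b b', b ≠ b' → Disjoint (B b) (B b')) (hT : ∀ b, T b ⊆ B b)
    (I : Finset ι) (f : X → M) : ∑ x ∈ I.biUnion T, f x = ∑ b ∈ I, ∑ x ∈ T b, f x :=
  sum_biUnion fun b _ b' _ hbb' => (hdisj b b' hbb').mono (hT b) (hT b')

/-- Prefix optimality in the constant-cost variant (Cons-k-Cost): if the wage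
function is constant on each bucket `B b`, and every bucket is enumerated by a
duplicate-free list `L b` sorted by nonincreasing skill, then replacing each
trace `G ∩ B b` of a feasible group `G` by the same number of most-skilled
workers of that bucket (a prefix of `L b`) again yields a feasible group. -/
theorem cons_k_cost_prefix_feasible {X : Type*} [DecidableEq X]
    (k : ℕ) (U : Finset X) (B : Fin k → Finset X)
    (hdisj : ∀ b b', b ≠ b' → Disjoint (B b) (B b'))
    (hcover : Finset.univ.biUnion B = U)
    (s : X → ℝ) (w : X → ℝ)
    (hwconst : ∀ b, ∀ x ∈ B b, ∀ y ∈ B b, w x = w y)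
    (L : Fin k → List X)
    (hnd : ∀ b, (L b).Nodup)
    (htf : ∀ b, (L b).toFinset = B b)
    (hsort : ∀ b, (L b).Pairwise fun x y => s y ≤ s x)
    (Q C : ℝ) (G : Finset X) (hG : G ⊆ U)
    (hq : Q ≤ ∑ v ∈ G, s v) (hc : (∑ v ∈ G, w v) ≤ C) :
    Q ≤ (∑ v ∈ Finset.univ.biUnion
          (fun b => ((L b).take (G ∩ B b).card).toFinset), s v) ∧
    (∑ v ∈ Finset.univ.biUnion
        (fun b => ((L b).take (G ∩ B b).card).toFinset), w v) ≤ C := by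
  set T : Fin k → Finset X := fun b => ((L b).take #(G ∩ B b)).toFinset
  have hTB b : T b ⊆ B b := htf b ▸ (L b).toFinset_take_subset _
  have hGB b : G ∩ B b ⊆ B b := inter_subset_right
  have hGsplit (f : X → ℝ) : ∑ v ∈ G, f v = ∑ b, ∑ v ∈ G ∩ B b, f v := by
    rw [← sum_biUnion_of_subset_of_disjoint hdisj hGB, ← inter_biUnion, hcover,
      inter_eq_left.mpr hG]
  have hskill b : ∑ v ∈ G ∩ B b, s v ≤ ∑ v ∈ T b, s v :=
    List.sum_le_sum_toFinset_take_card (hnd b) (hsort b) (htf b ▸ hGB b)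
  have hcard b : #(T b) = #(G ∩ B b) := by
    refine List.card_toFinset_take_of_nodup (hnd b) ?_
    rw [← List.toFinset_card_of_nodup (hnd b), htf b]
    exact card_le_card (hGB b)
  rw [sum_biUnion_of_subset_of_disjoint hdisj hTB, sum_biUnion_of_subset_of_disjoint hdisj hTB]
  constructor
  · exact hq.trans ((hGsplit s).trans_le (sum_le_sum fun b _ => hskill b))
  · calc ∑ b, ∑ v ∈ T b, w v = ∑ b, ∑ v ∈ G ∩ B b, w v := sum_congr rfl fun b _ =>
          sum_eq_sum_of_card_eq_of_subset_of_forall_eq (hwconst b) (hTB b) (hGB b) (hcard b)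
      _ ≤ C := hGsplit w ▸ hc
end

section
/- Let V be a finite set of n points in a metric space with distance d, and let K satisfy K < n ≤ 2K. Let (A, B) be any bipartition of V into two nonempty parts with |A| ≤ K and |B| ≤ K. Then there exists a bipartition (A', B') of V with |A'| = K (and hence |B'| = n − K), obtained by moving nodes from the lighter part to the heavier part, such that cut(A', B') ≤ 2 · cut(A, B), where cut(A,B) = ∑_{a∈A, b∈B} d(a,b). (This rebalancing step, justified by the triangle inequality, is the core of the 2-approximation of the optimal balanced partition SpltBOpt.) -/
/-!
Say `H` is the heavier part. Move any `K - |H|` points `S` of the lighter part `L` over to `H`.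
The new cut is `cut(H, L \ S) + cut(S, L \ S)`; the first term is at most `cut(H, L)`. For the
second, route every pair `(s, b)` through each `h ∈ H` by the triangle inequality and average over
`h`: this bounds it by `(|L| / |H|) · cut(H, L) ≤ cut(H, L)`.
-/

open Finset

section CutWeight

variable {X : Type*} [PseudoMetricSpace X]

def cutWeight (A B : Finset X) : ℝ :=
  ∑ a ∈ A, ∑ b ∈ B, dist a b

theorem cutWeight_nonneg (A B : Finset X) : 0 ≤ cutWeight A B :=
  sum_nonneg fun _ _ => sum_nonneg fun _ _ => dist_nonneg

theorem cutWeight_comm (A B : Finset X) : cutWeight A B = cutWeight B A := by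
  unfold cutWeight
  rw [sum_comm]
  simp only [dist_comm]

theorem cutWeight_mono_right (A : Finset X) {B B' : Finset X} (h : B ⊆ B') :
    cutWeight A B ≤ cutWeight A B' :=
  sum_le_sum fun _ _ => sum_le_sum_of_subset_of_nonneg h fun _ _ _ => dist_nonneg

theorem cutWeight_union_left [DecidableEq X] {A A' : Finset X} (h : Disjoint A A')
    (B : Finset X) : cutWeight (A ∪ A') B = cutWeight A B + cutWeight A' B :=
  sum_union h

theorem card_mul_cutWeight_le (H S T : Finset X) :
    #H * cutWeight S T ≤ #T * cutWeight S H + #S * cutWeight H T := by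
  calc (#H : ℝ) * cutWeight S T
      = ∑ h ∈ H, ∑ s ∈ S, ∑ t ∈ T, dist s t := by
        rw [sum_const, nsmul_eq_mul, cutWeight]
    _ ≤ ∑ h ∈ H, ∑ s ∈ S, ∑ t ∈ T, (dist s h + dist h t) := by
        gcongr with h _ s _ t _
        exact dist_triangle s h t
    _ = ∑ h ∈ H, ∑ s ∈ S, (#T * dist s h + ∑ t ∈ T, dist h t) := by
        simp only [sum_add_distrib, sum_const, nsmul_eq_mul]
    _ = #T * cutWeight S H + #S * cutWeight H T := by
        simp only [sum_add_distrib, sum_const, nsmul_eq_mul, ← mul_sum, cutWeight]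
        rw [sum_comm (s := H) (t := S)]

theorem cutWeight_sdiff_le_of_card_le [DecidableEq X] {H L S : Finset X} (hSL : S ⊆ L)
    (hLH : #L ≤ #H) : cutWeight S (L \ S) ≤ cutWeight H L := by
  rcases H.eq_empty_or_nonempty with rfl | hH
  · obtain rfl : L = ∅ := card_eq_zero.mp (by simpa using hLH)
    simp [cutWeight]
  have hcard : (#(L \ S) + #S : ℝ) ≤ #H := by
    exact_mod_cast (card_sdiff_add_card_eq_card hSL).trans_le hLH
  refine le_of_mul_le_mul_left ?_ (by exact_mod_cast hH.card_pos : (0 : ℝ) < #H)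
  calc (#H : ℝ) * cutWeight S (L \ S)
      ≤ #(L \ S) * cutWeight S H + #S * cutWeight H (L \ S) := card_mul_cutWeight_le H S _
    _ ≤ #(L \ S) * cutWeight H L + #S * cutWeight H L := by
        gcongr
        · rw [cutWeight_comm]; exact cutWeight_mono_right H hSL
        · exact cutWeight_mono_right H sdiff_subset
    _ = (#(L \ S) + #S) * cutWeight H L := by ring
    _ ≤ #H * cutWeight H L := by gcongr; exact cutWeight_nonneg H L

theorem exists_superset_card_eq_cutWeight_le [DecidableEq X] {H L : Finset X} {K : ℕ}
    (hdisj : Disjoint H L) (hLH : #L ≤ #H) (hHK : #H ≤ K) (hK : K ≤ #H + #L) :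
    ∃ A' ⊆ H ∪ L, #A' = K ∧ H ⊆ A' ∧
      cutWeight A' ((H ∪ L) \ A') ≤ 2 * cutWeight H L := by
  obtain ⟨S, hSL, hS⟩ := exists_subset_card_eq (s := L) (n := K - #H) (by omega)
  have hHS : Disjoint H S := hdisj.mono_right hSL
  have hrest : (H ∪ L) \ (H ∪ S) = L \ S :=
    calc (H ∪ L) \ (H ∪ S) = ((H ∪ L) \ H) \ S := sdiff_sdiff_left.symm
      _ = L \ S := by rw [union_sdiff_cancel_left hdisj]
  refine ⟨H ∪ S, union_subset_union_right hSL, ?_, subset_union_left, ?_⟩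
  · rw [card_union_of_disjoint hHS, hS]
    omega
  rw [hrest, cutWeight_union_left hHS, two_mul]
  exact add_le_add (cutWeight_mono_right H sdiff_subset) (cutWeight_sdiff_le_of_card_le hSL hLH)

end CutWeight

theorem spltBOpt_rebalancing_general {X : Type*} [MetricSpace X] [DecidableEq X]
    (V A B : Finset X) (K : ℕ)
    (hUnion : A ∪ B = V) (hdisj : Disjoint A B)
    (hAK : A.card ≤ K) (hBK : B.card ≤ K)
    (hK : K < V.card) :
    ∃ A' ⊆ V, A'.card = K ∧ (A ⊆ A' ∨ B ⊆ A') ∧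
      (∑ a ∈ A', ∑ b ∈ V \ A', dist a b) ≤
        2 * ∑ a ∈ A, ∑ b ∈ B, dist a b := by
  subst hUnion
  rw [card_union_of_disjoint hdisj] at hK
  rcases le_total #B #A with hBA | hAB
  · obtain ⟨A', hA'V, hcard, hAA', hcut⟩ :=
      exists_superset_card_eq_cutWeight_le hdisj hBA hAK hK.le
    exact ⟨A', hA'V, hcard, Or.inl hAA', hcut⟩
  · rw [union_comm]
    obtain ⟨A', hA'V, hcard, hBA', hcut⟩ :=
      exists_superset_card_eq_cutWeight_le hdisj.symm hAB hBK (by omega)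
    refine ⟨A', hA'V, hcard, Or.inr hBA', ?_⟩
    rwa [cutWeight_comm B] at hcut

/-- The rebalancing step of SpltBOpt: given `K < n ≤ 2K` and a bipartition
`(A, B)` of `V` into nonempty parts of size at most `K`, moving nodes from the
lighter part to the heavier part yields a bipartition `(A', V∖A')` with
`|A'| = K` whose cut weight is at most twice that of `(A, B)`. -/
theorem spltBOpt_rebalancing {X : Type*} [MetricSpace X] [DecidableEq X]
    (V A B : Finset X) (K : ℕ)
    (hUnion : A ∪ B = V) (hdisj : Disjoint A B)
    (hAne : A.Nonempty) (hBne : B.Nonempty)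
    (hAK : A.card ≤ K) (hBK : B.card ≤ K)
    (hK : K < V.card) (hn : V.card ≤ 2 * K) :
    ∃ A' ⊆ V, A'.card = K ∧ (A ⊆ A' ∨ B ⊆ A') ∧
      (∑ a ∈ A', ∑ b ∈ V \ A', dist a b) ≤
        2 * ∑ a ∈ A, ∑ b ∈ B, dist a b :=
  spltBOpt_rebalancing_general V A B K hUnion hdisj hAK hBK hK
end
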